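/- arXiv:1502.05748 — 4 statements merged into one kernel-verified Lean document; each statement's English description precedes it below -/
import Mathlib

section
/- Let φ(x₁,…,xₙ) be a propositional formula and a₁,…,aₙ an M-valuation with |φ(a₁,…,aₙ)| = |aᵢ|, where |a₁| ≤ ⋯ ≤ |a_{i−1}| < |aᵢ| ≤ ⋯ ≤ |aₙ|. Then for any two binary valuations b, b′ ∈ {T,F}ⁿ that both satisfy b_j = p(a_j) and b′_j = p(a_j) for all j ≥ i (and are arbitrary on positions 1,…,i−1), the binary evaluations agree: φ(b₁,…,bₙ) = φ(b′₁,…,b′ₙ); moreover this common value equals p(φ(a₁,…,aₙ)). -/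
/-!
Induct on `φ` with a threshold `t > 0`: if `t ≤ |φ(a)|` and the binary valuation agrees with the
signs of `a` at every entry with `|a j| ≥ t`, then the binary value of `φ` is the sign of `φ(a)`.
For `min u v = u < 0` the argument `u` alone makes the conjunction false, while for `min u v = u > 0`
both arguments are positive and `|v| ≥ |u| ≥ t`; `max` is dual. Take `t = |a i|`: every entry with
`|a j| ≥ t` sits at a position `j ≥ i`.
-/

/-- Propositional formulas over `n` variables, built from `¬`, `∧`, `∨`. -/
inductive PropForm (n : ℕ) : Type where
  | var : Fin n → PropForm n
  | neg : PropForm n → PropForm n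
  | conj : PropForm n → PropForm n → PropForm n
  | disj : PropForm n → PropForm n → PropForm n

namespace PropForm

/-- The multiple-valued semantics `M` over the integers:
`∧` is `min`, `∨` is `max`, `¬` is integer negation. -/
def evalM {n : ℕ} (v : Fin n → ℤ) : PropForm n → ℤ
  | var i => v i
  | neg φ => -(evalM v φ)
  | conj φ ψ => min (evalM v φ) (evalM v ψ)
  | disj φ ψ => max (evalM v φ) (evalM v ψ)

/-- The binary semantics `B₂` over `Bool`. -/
def evalB {n : ℕ} (b : Fin n → Bool) : PropForm n → Bool
  | var i => b i
  | neg φ => !(evalB b φ)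
  | conj φ ψ => evalB b φ && evalB b ψ
  | disj φ ψ => evalB b φ || evalB b ψ

end PropForm

section SignMap

variable {α : Type*} [AddCommGroup α] [LinearOrder α] [IsOrderedAddMonoid α]

theorem decide_pos_neg {x : α} (hx : x ≠ 0) : decide (0 < -x) = !decide (0 < x) := by
  rcases hx.lt_or_gt with h | h
  · simp [h, h.not_gt]
  · simp [h, h.le]

variable {t u v : α} {β γ : Bool}

theorem and_eq_decide_pos_min (hβ : t ≤ |u| → β = decide (0 < u))
    (hγ : t ≤ |v| → γ = decide (0 < v)) (ht : t ≤ |min u v|) :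
    (β && γ) = decide (0 < min u v) := by
  wlog huv : u ≤ v generalizing u v β γ
  · simpa only [Bool.and_comm, min_comm] using
      this hγ hβ (by rwa [min_comm]) (le_of_not_ge huv)
  rw [min_eq_left huv] at ht ⊢
  by_cases hu : 0 < u
  · have hv : 0 < v := hu.trans_le huv
    have hvt : t ≤ |v| := ht.trans (by rwa [abs_of_pos hu, abs_of_pos hv])
    simp [hβ ht, hγ hvt, hu, hv]
  · simp [hβ ht, hu]

theorem or_eq_decide_pos_max (hβ : t ≤ |u| → β = decide (0 < u))
    (hγ : t ≤ |v| → γ = decide (0 < v)) (ht : t ≤ |max u v|) :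
    (β || γ) = decide (0 < max u v) := by
  wlog huv : u ≤ v generalizing u v β γ
  · simpa only [Bool.or_comm, max_comm] using
      this hγ hβ (by rwa [max_comm]) (le_of_not_ge huv)
  rw [max_eq_right huv] at ht ⊢
  by_cases hv : 0 < v
  · simp [hγ ht, hv]
  · have hv : v ≤ 0 := not_lt.mp hv
    have hut : t ≤ |u| :=
      ht.trans (by rw [abs_of_nonpos hv, abs_of_nonpos (huv.trans hv)]; exact neg_le_neg huv)
    simp [hβ hut, hγ ht, (huv.trans hv).not_gt, hv.not_gt]

end SignMap

namespace PropForm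

theorem evalB_eq_decide_pos_evalM {n : ℕ} {a : Fin n → ℤ} {b : Fin n → Bool} {t : ℤ}
    (ht : 0 < t) (hb : ∀ j, t ≤ |a j| → b j = decide (0 < a j)) :
    ∀ φ : PropForm n, t ≤ |evalM a φ| → evalB b φ = decide (0 < evalM a φ)
  | var j, hφ => hb j hφ
  | neg φ, hφ => by
    rw [evalM, abs_neg] at hφ
    rw [evalB, evalM, decide_pos_neg (abs_pos.mp (ht.trans_le hφ)),
      evalB_eq_decide_pos_evalM ht hb φ hφ]
  | conj φ ψ, hφ =>
    and_eq_decide_pos_min (evalB_eq_decide_pos_evalM ht hb φ)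
      (evalB_eq_decide_pos_evalM ht hb ψ) hφ
  | disj φ ψ, hφ =>
    or_eq_decide_pos_max (evalB_eq_decide_pos_evalM ht hb φ)
      (evalB_eq_decide_pos_evalM ht hb ψ) hφ

end PropForm

theorem binary_indep_of_small_entries_general {n : ℕ} (φ : PropForm n) (a : Fin n → ℤ)
    (ha : ∀ j, a j ≠ 0) (i : Fin n)
    (hstrict : ∀ j : Fin n, j < i → |a j| < |a i|)
    (habs : |PropForm.evalM a φ| = |a i|)
    (b b' : Fin n → Bool)
    (hb : ∀ j, i ≤ j → b j = decide (0 < a j))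
    (hb' : ∀ j, i ≤ j → b' j = decide (0 < a j)) :
    PropForm.evalB b φ = PropForm.evalB b' φ ∧
    PropForm.evalB b φ = decide (0 < PropForm.evalM a φ) := by
  have hpos : 0 < |a i| := abs_pos.mpr (ha i)
  have large_entries_agree (c : Fin n → Bool) (hc : ∀ j, i ≤ j → c j = decide (0 < a j))
      (j : Fin n) (hj : |a i| ≤ |a j|) : c j = decide (0 < a j) :=
    hc j (not_lt.mp fun hji => (hstrict j hji).not_ge hj)
  have hb_sign := PropForm.evalB_eq_decide_pos_evalM hpos (large_entries_agree b hb) φ habs.ge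
  have hb'_sign := PropForm.evalB_eq_decide_pos_evalM hpos (large_entries_agree b' hb') φ habs.ge
  exact ⟨hb_sign.trans hb'_sign.symm, hb_sign⟩

/-- if `|⟦φ⟧ₐ| = |a i|` with `|a 0| ≤ ⋯ ≤ |a (i-1)| < |a i| ≤ ⋯ ≤ |a (n-1)|`,
then the binary evaluation of `φ` does not depend on the entries below position `i`,
as long as from position `i` on the binary valuation agrees with the sign map `p` of
the `M`-valuation; moreover the common value is `p(⟦φ⟧ₐ)`. -/
theorem binary_indep_of_small_entries {n : ℕ} (φ : PropForm n) (a : Fin n → ℤ)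
    (ha : ∀ j, a j ≠ 0) (i : Fin n)
    (hmono : ∀ j k : Fin n, j ≤ k → |a j| ≤ |a k|)
    (hstrict : ∀ j : Fin n, j < i → |a j| < |a i|)
    (habs : |PropForm.evalM a φ| = |a i|)
    (b b' : Fin n → Bool)
    (hb : ∀ j, i ≤ j → b j = decide (0 < a j))
    (hb' : ∀ j, i ≤ j → b' j = decide (0 < a j)) :
    PropForm.evalB b φ = PropForm.evalB b' φ ∧
    PropForm.evalB b φ = decide (0 < PropForm.evalM a φ) :=
  binary_indep_of_small_entries_general φ a ha i hstrict habs b b' hb hb'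
end

section
/- Let φ(x₁,…,xₙ) be a propositional formula and a₁,…,aₙ an M-valuation with |φ(a₁,…,aₙ)| = b. Let a′₁,…,a′ₙ be another M-valuation such that for each index j one of the following holds: (i) a′_j = a_j; or (ii) |a_j| < b and |a′_j| < b (the sign may change arbitrarily); or (iii) |a_j| > b, |a′_j| > b, and a′_j has the same sign as a_j. Then φ(a′₁,…,a′ₙ) = φ(a₁,…,aₙ). -/
/-!
Call `x` and `y` indistinguishable at level `b` when they are equal, or both of absolute value
below `b`, or both of absolute value above `b` with the same sign. Negation, `min` and `max`
preserve this relation, so by induction `φ(a)` and `φ(a')` are indistinguishable at level `b`;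
since `|φ(a)| = b` is neither below nor above `b`, they must be equal.
-/

namespace PropForm

def IndistinguishableAt (b x y : ℤ) : Prop :=
  y = x ∨ (|x| < b ∧ |y| < b) ∨ (b < |x| ∧ b < |y| ∧ (0 < x ↔ 0 < y))

namespace IndistinguishableAt

variable {b x₁ y₁ x₂ y₂ : ℤ}

theorem neg (hb : 0 ≤ b) (h : IndistinguishableAt b x₁ y₁) :
    IndistinguishableAt b (-x₁) (-y₁) := by
  simp only [IndistinguishableAt, abs_lt, lt_abs] at *; omega

theorem min (h₁ : IndistinguishableAt b x₁ y₁) (h₂ : IndistinguishableAt b x₂ y₂) :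
    IndistinguishableAt b (min x₁ x₂) (min y₁ y₂) := by
  simp only [IndistinguishableAt, abs_lt, lt_abs, min_def] at *; split_ifs <;> omega

theorem max (h₁ : IndistinguishableAt b x₁ y₁) (h₂ : IndistinguishableAt b x₂ y₂) :
    IndistinguishableAt b (max x₁ x₂) (max y₁ y₂) := by
  simp only [IndistinguishableAt, abs_lt, lt_abs, max_def] at *; split_ifs <;> omega

end IndistinguishableAt

theorem evalM_indistinguishableAt {n : ℕ} {b : ℤ} {a a' : Fin n → ℤ} (hb : 0 ≤ b)
    (h : ∀ j, IndistinguishableAt b (a j) (a' j)) :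
    ∀ φ : PropForm n, IndistinguishableAt b (evalM a φ) (evalM a' φ)
  | var j => h j
  | neg φ => (evalM_indistinguishableAt hb h φ).neg hb
  | conj φ ψ => (evalM_indistinguishableAt hb h φ).min (evalM_indistinguishableAt hb h ψ)
  | disj φ ψ => (evalM_indistinguishableAt hb h φ).max (evalM_indistinguishableAt hb h ψ)

end PropForm

theorem evalM_invariant_general {n : ℕ} (φ : PropForm n) (a a' : Fin n → ℤ)
    (b : ℤ) (hb : |PropForm.evalM a φ| = b)
    (h : ∀ j, a' j = a j ∨
      (|a j| < b ∧ |a' j| < b) ∨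
      (b < |a j| ∧ b < |a' j| ∧ (0 < a j ↔ 0 < a' j))) :
    PropForm.evalM a' φ = PropForm.evalM a φ := by
  rcases PropForm.evalM_indistinguishableAt (hb ▸ abs_nonneg _) h φ with
    heq | ⟨hlt, -⟩ | ⟨hgt, -⟩
  · exact heq
  · exact absurd hb hlt.ne
  · exact absurd hb hgt.ne'

/-- the `M`-value of `φ` is invariant under any change of the
arguments of absolute value less than `b = |⟦φ⟧ₐ|` (sign changes allowed) and
under sign-preserving changes of the arguments of absolute value greater
than `b`. -/
theorem evalM_invariant {n : ℕ} (φ : PropForm n) (a a' : Fin n → ℤ)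
    (ha : ∀ j, a j ≠ 0) (ha' : ∀ j, a' j ≠ 0)
    (b : ℤ) (hb : |PropForm.evalM a φ| = b)
    (h : ∀ j, a' j = a j ∨
      (|a j| < b ∧ |a' j| < b) ∨
      (b < |a j| ∧ b < |a' j| ∧ (0 < a j ↔ 0 < a' j))) :
    PropForm.evalM a' φ = PropForm.evalM a φ :=
  evalM_invariant_general φ a a' b hb h
end

section
/- Let φ and ψ be propositional formulas, let Φ be a DNF that is M-equivalent to φ, and let Ψ be a DNF that is M-equivalent to ψ. Suppose Φ has a non-contradictory term γ in which no variable occurs twice, and suppose no non-contradictory term of Ψ is a subterm of γ. Then there exists an M-valuation v (namely: assign 2 to each variable occurring positively in γ, −2 to each variable occurring negatively in γ, and 1 to every other variable) such that 0 < ⟦φ⟧_v and ⟦ψ⟧_v < ⟦φ⟧_v. -/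
/-- A literal: a variable together with a polarity (`true` = positive). -/
abbrev Lit (n : ℕ) := Fin n × Bool

/-- `M`-value of a literal under a valuation. -/
def litValM {n : ℕ} (v : Fin n → ℤ) (l : Lit n) : ℤ :=
  if l.2 then v l.1 else -(v l.1)

/-- Binary value of a literal under a binary valuation. -/
def litValB {n : ℕ} (b : Fin n → Bool) (l : Lit n) : Bool :=
  if l.2 then b l.1 else !(b l.1)

/-- `M`-value of a conjunctive term (a list of literals), the minimum of the
literal values (for nonempty terms; the value on `[]` is a dummy). -/
def Term.evalM {n : ℕ} (v : Fin n → ℤ) : List (Lit n) → ℤ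
  | [] => 0
  | [l] => litValM v l
  | l :: ls => min (litValM v l) (Term.evalM v ls)

/-- Binary value of a conjunctive term: the conjunction of its literal values. -/
def Term.evalB {n : ℕ} (b : Fin n → Bool) (t : List (Lit n)) : Bool :=
  t.all (litValB b)

/-- `M`-value of a DNF (a list of conjunctive terms), the maximum of the
term values (for nonempty DNFs; the value on `[]` is a dummy). -/
def DNF.evalM {n : ℕ} (v : Fin n → ℤ) : List (List (Lit n)) → ℤ
  | [] => 0
  | [t] => Term.evalM v t
  | t :: ts => max (Term.evalM v t) (DNF.evalM v ts)

/-- A term is contradictory if it contains both `x` and `¬x` for some variable. -/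
def Contra {n : ℕ} (t : List (Lit n)) : Prop :=
  ∃ i : Fin n, ((i, true) : Lit n) ∈ t ∧ ((i, false) : Lit n) ∈ t

/-!
Under the valuation `v` attached to `γ`, every literal of `γ` has value `2` (this is where
non-contradiction of `γ` enters) and every other literal has value at most `1`. Hence `γ`, and
with it `Φ` and `φ`, takes the largest possible value `2`. Every term of `Ψ` is either
contradictory, so its value is at most `min (v x) (-v x) ≤ 0`, or contains a literal outside `γ`,
so its value is at most `1`; hence `⟦ψ⟧ᵥ ≤ 1 < 2 = ⟦φ⟧ᵥ`.
-/

namespace Term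

variable {n : ℕ} (v : Fin n → ℤ)

lemma evalM_le_litValM {t : List (Lit n)} {l : Lit n} (hl : l ∈ t) :
    Term.evalM v t ≤ litValM v l := by
  induction t with
  | nil => cases hl
  | cons a t ih =>
    cases t with
    | nil => simp_all [Term.evalM]
    | cons b t =>
      rcases List.mem_cons.mp hl with rfl | hl
      · exact min_le_left _ _
      · exact (min_le_right _ _).trans (ih hl)

lemma le_evalM {t : List (Lit n)} {c : ℤ} (ht : t ≠ []) (h : ∀ l ∈ t, c ≤ litValM v l) :
    c ≤ Term.evalM v t := by
  induction t with
  | nil => exact absurd rfl ht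
  | cons a t ih =>
    cases t with
    | nil => simpa [Term.evalM] using h a (by simp)
    | cons b t => exact le_min (h a (by simp)) (ih (by simp) fun l hl => h l (by simp [hl]))

/-- The empty term evaluates to `0`, hence the sign condition. -/
lemma evalM_le {t : List (Lit n)} {c : ℤ} (hc : 0 ≤ c) (h : ∀ l ∈ t, litValM v l ≤ c) :
    Term.evalM v t ≤ c := by
  cases t with
  | nil => exact hc
  | cons l t => exact (evalM_le_litValM v (List.mem_cons_self ..)).trans (h l (by simp))

lemma evalM_nonpos_of_contra {t : List (Lit n)} (ht : Contra t) : Term.evalM v t ≤ 0 := by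
  obtain ⟨i, hpos, hneg⟩ := ht
  have h₁ : Term.evalM v t ≤ v i := evalM_le_litValM v hpos
  have h₂ : Term.evalM v t ≤ -v i := evalM_le_litValM v hneg
  omega

end Term

namespace DNF

variable {n : ℕ} (v : Fin n → ℤ)

lemma evalM_le_evalM_of_mem {Φ : List (List (Lit n))} {t : List (Lit n)} (ht : t ∈ Φ) :
    Term.evalM v t ≤ DNF.evalM v Φ := by
  induction Φ with
  | nil => cases ht
  | cons a Φ ih =>
    cases Φ with
    | nil => simp_all [DNF.evalM]
    | cons b Φ =>
      rcases List.mem_cons.mp ht with rfl | ht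
      · exact le_max_left _ _
      · exact (ih ht).trans (le_max_right _ _)

/-- The empty DNF evaluates to `0`, hence the sign condition. -/
lemma evalM_le {Φ : List (List (Lit n))} {c : ℤ} (hc : 0 ≤ c)
    (h : ∀ t ∈ Φ, Term.evalM v t ≤ c) : DNF.evalM v Φ ≤ c := by
  induction Φ with
  | nil => exact hc
  | cons a Φ ih =>
    cases Φ with
    | nil => simpa [DNF.evalM] using h a (by simp)
    | cons b Φ => exact max_le (h a (by simp)) (ih fun t ht => h t (by simp [ht]))

end DNF

namespace Term

variable {n : ℕ}

def canonicalValuation (γ : List (Lit n)) (i : Fin n) : ℤ :=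
  if ((i, true) : Lit n) ∈ γ then 2 else if ((i, false) : Lit n) ∈ γ then -2 else 1

variable {γ : List (Lit n)}

lemma canonicalValuation_ne_zero (i : Fin n) : canonicalValuation γ i ≠ 0 := by
  unfold canonicalValuation
  split_ifs <;> norm_num

lemma litValM_canonicalValuation_of_mem (hγ : ¬ Contra γ) {l : Lit n} (hl : l ∈ γ) :
    litValM (canonicalValuation γ) l = 2 := by
  obtain ⟨i, _ | _⟩ := l
  · have hpos : ((i, true) : Lit n) ∉ γ := fun h => hγ ⟨i, h, hl⟩
    simp [litValM, canonicalValuation, hpos, hl]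
  · simp [litValM, canonicalValuation, hl]

lemma litValM_canonicalValuation_le_one_of_not_mem {l : Lit n} (hl : l ∉ γ) :
    litValM (canonicalValuation γ) l ≤ 1 := by
  obtain ⟨i, _ | _⟩ := l <;> simp only [litValM, canonicalValuation] <;> split_ifs <;> simp_all

lemma litValM_canonicalValuation_le_two (hγ : ¬ Contra γ) (l : Lit n) :
    litValM (canonicalValuation γ) l ≤ 2 := by
  by_cases hl : l ∈ γ
  · exact (litValM_canonicalValuation_of_mem hγ hl).le
  · exact (litValM_canonicalValuation_le_one_of_not_mem hl).trans (by norm_num)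

lemma evalM_canonicalValuation_le_two (hγ : ¬ Contra γ) (t : List (Lit n)) :
    Term.evalM (canonicalValuation γ) t ≤ 2 :=
  evalM_le _ zero_le_two fun l _ => litValM_canonicalValuation_le_two hγ l

lemma evalM_canonicalValuation_self (hne : γ ≠ []) (hγ : ¬ Contra γ) :
    Term.evalM (canonicalValuation γ) γ = 2 :=
  le_antisymm (evalM_canonicalValuation_le_two hγ γ)
    (le_evalM _ hne fun _ hl => (litValM_canonicalValuation_of_mem hγ hl).ge)

lemma evalM_canonicalValuation_le_one {δ : List (Lit n)}
    (hδ : ¬ Contra δ → ¬ ∀ l ∈ δ, l ∈ γ) : Term.evalM (canonicalValuation γ) δ ≤ 1 := by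
  by_cases hc : Contra δ
  · exact (evalM_nonpos_of_contra _ hc).trans zero_le_one
  · obtain ⟨l, hl, hlγ⟩ := not_forall₂.mp (hδ hc)
    exact (evalM_le_litValM _ hl).trans (litValM_canonicalValuation_le_one_of_not_mem hlγ)

end Term

open Term in
theorem exists_valuation_gt_general {n : ℕ} (φ ψ : PropForm n)
    (Φ Ψ : List (List (Lit n)))
    (hΦt : ∀ t ∈ Φ, t ≠ [])
    (hΦ : ∀ v : Fin n → ℤ, (∀ i, v i ≠ 0) → DNF.evalM v Φ = PropForm.evalM v φ)
    (hΨ : ∀ v : Fin n → ℤ, (∀ i, v i ≠ 0) → DNF.evalM v Ψ = PropForm.evalM v ψ)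
    (γ : List (Lit n)) (hγ : γ ∈ Φ) (hγc : ¬ Contra γ)
    (hsub : ∀ δ ∈ Ψ, ¬ Contra δ → ¬ (∀ l ∈ δ, l ∈ γ))
    (v : Fin n → ℤ)
    (hv : ∀ i : Fin n, v i =
      if ((i, true) : Lit n) ∈ γ then 2
      else if ((i, false) : Lit n) ∈ γ then -2 else 1) :
    0 < PropForm.evalM v φ ∧ PropForm.evalM v ψ < PropForm.evalM v φ := by
  obtain rfl : v = canonicalValuation γ := funext hv
  have hφ : PropForm.evalM (canonicalValuation γ) φ = 2 := by
    rw [← hΦ _ canonicalValuation_ne_zero]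
    refine le_antisymm (DNF.evalM_le _ zero_le_two fun t _ => ?_) ?_
    · exact evalM_canonicalValuation_le_two hγc t
    · exact evalM_canonicalValuation_self (hΦt γ hγ) hγc ▸ DNF.evalM_le_evalM_of_mem _ hγ
  have hψ : PropForm.evalM (canonicalValuation γ) ψ ≤ 1 := by
    rw [← hΨ _ canonicalValuation_ne_zero]
    exact DNF.evalM_le _ zero_le_one fun δ hδ => evalM_canonicalValuation_le_one (hsub δ hδ)
  omega

/-- if a DNF `Φ` that is `M`-equivalent to `φ` has a non-contradictory
term `γ` with no repeated variable, and no non-contradictory term of a DNF `Ψ`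
`M`-equivalent to `ψ` is a subterm of `γ`, then the valuation assigning `2` to the
positive variables of `γ`, `-2` to its negative variables and `1` elsewhere makes
`0 < ⟦φ⟧ᵥ` and `⟦ψ⟧ᵥ < ⟦φ⟧ᵥ`. -/
theorem exists_valuation_gt {n : ℕ} (φ ψ : PropForm n)
    (Φ Ψ : List (List (Lit n)))
    (hΦne : Φ ≠ []) (hΦt : ∀ t ∈ Φ, t ≠ [])
    (hΨne : Ψ ≠ []) (hΨt : ∀ t ∈ Ψ, t ≠ [])
    (hΦ : ∀ v : Fin n → ℤ, (∀ i, v i ≠ 0) → DNF.evalM v Φ = PropForm.evalM v φ)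
    (hΨ : ∀ v : Fin n → ℤ, (∀ i, v i ≠ 0) → DNF.evalM v Ψ = PropForm.evalM v ψ)
    (γ : List (Lit n)) (hγ : γ ∈ Φ) (hγc : ¬ Contra γ)
    (hγnd : (γ.map Prod.fst).Nodup)
    (hsub : ∀ δ ∈ Ψ, ¬ Contra δ → ¬ (∀ l ∈ δ, l ∈ γ))
    (v : Fin n → ℤ)
    (hv : ∀ i : Fin n, v i =
      if ((i, true) : Lit n) ∈ γ then 2
      else if ((i, false) : Lit n) ∈ γ then -2 else 1) :
    0 < PropForm.evalM v φ ∧ PropForm.evalM v ψ < PropForm.evalM v φ :=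
  exists_valuation_gt_general φ ψ Φ Ψ hΦt hΦ hΨ γ hγ hγc hsub v hv
end

section
/- Let φ and ψ be binary-equivalent satisfiable propositional formulas on the variables x₁,…,xₙ, let D_φ be a DNF that is M-equivalent to φ and D_ψ a DNF that is M-equivalent to ψ, and let D_φ^imp and D_ψ^imp denote the disjunctions of the non-contradictory terms of D_φ and of D_ψ respectively. Then for every M-valuation v with ⟦φ⟧_v < 0, one has ⟦D_φ^imp⟧_v = ⟦D_ψ^imp⟧_v. -/
instance {n : ℕ} (t : List (Lit n)) : Decidable (Contra t) :=
  inferInstanceAs (Decidable (∃ i : Fin n, ((i, true) : Lit n) ∈ t ∧ ((i, false) : Lit n) ∈ t))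

/-- The implicant (non-contradictory) part of a DNF. -/
def impPart {n : ℕ} (D : List (List (Lit n))) : List (List (Lit n)) :=
  D.filter (fun t => decide (¬ Contra t))

/-!
Under a valuation `v` without zeros, `M`-values and binary values agree in sign: a formula, term
or DNF is positive at `v` iff it is true at the sign pattern `b` of `v`. So if `⟦φ⟧_v < 0`, then
`φ`, `ψ` and every implicant of `Dφ` and `Dψ` are false at `b`. Given an implicant `t` of `Dψ`,
flip `b` on the variables where `t` is false; the result satisfies `t`, hence `ψ`, hence `φ`, hence
some implicant `s` of `Dφ`. Each literal of `s` is either true at `b`, so positive at `v` while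
`⟦t⟧_v < 0`, or a literal of `t`; hence `⟦t⟧_v ≤ ⟦s⟧_v`. By symmetry the two maxima agree.
-/

variable {n : ℕ}

theorem litValB_eq_true_iff (b : Fin n → Bool) (l : Lit n) : litValB b l = true ↔ b l.1 = l.2 := by
  rcases l with ⟨i, _ | _⟩ <;> simp [litValB]

theorem not_decide_pos {x : ℤ} (hx : x ≠ 0) : (!decide (0 < x)) = decide (0 < -x) := by
  rcases hx.lt_or_gt with h | h <;> simp [h, h.le]

def signValuation (v : Fin n → ℤ) : Fin n → Bool := fun i => decide (0 < v i)

theorem litValB_signValuation {v : Fin n → ℤ} (hv : ∀ i, v i ≠ 0) (l : Lit n) :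
    litValB (signValuation v) l = decide (0 < litValM v l) := by
  rcases l with ⟨i, _ | _⟩
  · exact not_decide_pos (hv i)
  · rfl

namespace PropForm

theorem evalM_ne_zero {v : Fin n → ℤ} (hv : ∀ i, v i ≠ 0) : ∀ φ : PropForm n, evalM v φ ≠ 0
  | var i => hv i
  | neg φ => neg_ne_zero.2 (evalM_ne_zero hv φ)
  | conj φ ψ => show min _ _ ≠ 0 from
      min_rec (p := (· ≠ 0)) (fun _ => evalM_ne_zero hv φ) (fun _ => evalM_ne_zero hv ψ)
  | disj φ ψ => show max _ _ ≠ 0 from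
      max_rec (p := (· ≠ 0)) (fun _ => evalM_ne_zero hv φ) (fun _ => evalM_ne_zero hv ψ)

theorem evalB_signValuation {v : Fin n → ℤ} (hv : ∀ i, v i ≠ 0) :
    ∀ φ : PropForm n, evalB (signValuation v) φ = decide (0 < evalM v φ)
  | var i => rfl
  | neg φ => by
    rw [evalB, evalM, evalB_signValuation hv φ, not_decide_pos (evalM_ne_zero hv φ)]
  | conj φ ψ => by
    simp only [evalB, evalM, evalB_signValuation hv φ, evalB_signValuation hv ψ, lt_min_iff,
      Bool.decide_and]
  | disj φ ψ => by
    simp only [evalB, evalM, evalB_signValuation hv φ, evalB_signValuation hv ψ, lt_max_iff,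
      Bool.decide_or]

end PropForm

namespace Term

variable (v : Fin n → ℤ)

theorem le_evalM_iff {c : ℤ} :
    ∀ {t : List (Lit n)}, t ≠ [] → (c ≤ evalM v t ↔ ∀ l ∈ t, c ≤ litValM v l)
  | [_], _ => by simp [evalM]
  | l :: l' :: ls, _ => by
    simp only [evalM, le_min_iff, le_evalM_iff (List.cons_ne_nil l' ls), List.forall_mem_cons]

theorem lt_evalM_iff {c : ℤ} :
    ∀ {t : List (Lit n)}, t ≠ [] → (c < evalM v t ↔ ∀ l ∈ t, c < litValM v l)
  | [_], _ => by simp [evalM]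
  | l :: l' :: ls, _ => by
    simp only [evalM, lt_min_iff, lt_evalM_iff (List.cons_ne_nil l' ls), List.forall_mem_cons]

theorem evalB_signValuation {v : Fin n → ℤ} (hv : ∀ i, v i ≠ 0) {t : List (Lit n)} (ht : t ≠ []) :
    evalB (signValuation v) t = decide (0 < evalM v t) := by
  simp only [evalB, List.all_eq, litValB_signValuation hv, decide_eq_true_eq, lt_evalM_iff v ht]

theorem evalB_eq_false_of_contra (b : Fin n → Bool) {t : List (Lit n)} (ht : Contra t) :
    evalB b t = false := by
  obtain ⟨i, hpos, hneg⟩ := ht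
  rw [Bool.eq_false_iff]
  intro h
  have hpos := (litValB_eq_true_iff b _).1 (List.all_eq_true.1 h _ hpos)
  have hneg := (litValB_eq_true_iff b _).1 (List.all_eq_true.1 h _ hneg)
  simp_all

end Term

namespace DNF

variable (v : Fin n → ℤ)

theorem evalM_le_iff {c : ℤ} :
    ∀ {D : List (List (Lit n))}, D ≠ [] → (evalM v D ≤ c ↔ ∀ t ∈ D, Term.evalM v t ≤ c)
  | [_], _ => by simp [evalM]
  | t :: t' :: ts, _ => by
    simp only [evalM, max_le_iff, evalM_le_iff (List.cons_ne_nil t' ts), List.forall_mem_cons]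

theorem le_evalM_iff {c : ℤ} :
    ∀ {D : List (List (Lit n))}, D ≠ [] → (c ≤ evalM v D ↔ ∃ t ∈ D, c ≤ Term.evalM v t)
  | [_], _ => by simp [evalM]
  | t :: t' :: ts, _ => by
    simp only [evalM, le_max_iff, le_evalM_iff (List.cons_ne_nil t' ts), List.exists_mem_cons_iff]

theorem lt_evalM_iff {c : ℤ} :
    ∀ {D : List (List (Lit n))}, D ≠ [] → (c < evalM v D ↔ ∃ t ∈ D, c < Term.evalM v t)
  | [_], _ => by simp [evalM]
  | t :: t' :: ts, _ => by
    simp only [evalM, lt_max_iff, lt_evalM_iff (List.cons_ne_nil t' ts), List.exists_mem_cons_iff]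

theorem evalM_le_of_forall_exists_le {A B : List (List (Lit n))} (hA : A ≠ [])
    (h : ∀ t ∈ A, ∃ s ∈ B, Term.evalM v t ≤ Term.evalM v s) : evalM v A ≤ evalM v B := by
  obtain ⟨s₀, hs₀, -⟩ := h _ (List.head_mem hA)
  refine (evalM_le_iff v hA).2 fun t ht => ?_
  obtain ⟨s, hs, hts⟩ := h t ht
  exact hts.trans ((le_evalM_iff v (List.ne_nil_of_mem hs₀)).2 ⟨s, hs, le_rfl⟩)

theorem evalM_eq_of_forall_exists_le {A B : List (List (Lit n))}
    (hAB : ∀ t ∈ A, ∃ s ∈ B, Term.evalM v t ≤ Term.evalM v s)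
    (hBA : ∀ s ∈ B, ∃ t ∈ A, Term.evalM v s ≤ Term.evalM v t) :
    evalM v A = evalM v B := by
  by_cases hA : A = []
  · have hB : B = [] := List.eq_nil_iff_forall_not_mem.2 fun s hs => by
      obtain ⟨t, ht, -⟩ := hBA s hs
      simp [hA] at ht
    rw [hA, hB]
  · obtain ⟨s, hs, -⟩ := hAB _ (List.head_mem hA)
    exact le_antisymm (evalM_le_of_forall_exists_le v hA hAB)
      (evalM_le_of_forall_exists_le v (List.ne_nil_of_mem hs) hBA)

end DNF

theorem mem_impPart {D : List (List (Lit n))} {t : List (Lit n)} :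
    t ∈ impPart D ↔ t ∈ D ∧ ¬Contra t := by
  simp [impPart]

namespace DNF

def evalB (b : Fin n → Bool) (D : List (List (Lit n))) : Bool :=
  D.any (Term.evalB b)

theorem evalB_impPart (b : Fin n → Bool) (D : List (List (Lit n))) :
    evalB b (impPart D) = evalB b D := by
  rw [evalB, impPart, List.any_filter]
  congr 1
  funext t
  by_cases ht : Contra t <;> simp [ht, Term.evalB_eq_false_of_contra]

theorem evalB_signValuation {v : Fin n → ℤ} (hv : ∀ i, v i ≠ 0) {D : List (List (Lit n))}
    (hD : ∀ t ∈ D, t ≠ []) : evalB (signValuation v) D = decide (0 < evalM v D) := by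
  by_cases hD' : D = []
  · subst hD'; rfl
  rw [Bool.eq_iff_iff]
  simp only [evalB, List.any_eq_true, decide_eq_true_eq, lt_evalM_iff v hD']
  exact exists_congr fun t => and_congr_right fun ht => by
    rw [Term.evalB_signValuation hv (hD t ht), decide_eq_true_eq]

/-- Evaluate at the `M`-valuation `±1` whose signs are `b`. -/
theorem evalB_eq_of_evalM_eq {φ : PropForm n} {D : List (List (Lit n))} (hDt : ∀ t ∈ D, t ≠ [])
    (hD : ∀ v : Fin n → ℤ, (∀ i, v i ≠ 0) → evalM v D = φ.evalM v) (b : Fin n → Bool) :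
    evalB b D = φ.evalB b := by
  set u : Fin n → ℤ := fun i => if b i then 1 else -1
  have hu : ∀ i, u i ≠ 0 := fun i => by dsimp only [u]; split_ifs <;> norm_num
  have hub : signValuation u = b := funext fun i => by cases h : b i <;> simp [signValuation, u, h]
  rw [← hub, evalB_signValuation hu hDt, PropForm.evalB_signValuation hu, hD u hu]

end DNF

namespace Term

/-- The least change of `b` making the non-contradictory term `t` true. -/
def override (b : Fin n → Bool) (t : List (Lit n)) : Fin n → Bool :=
  fun i => if ((i, !b i) : Lit n) ∈ t then !b i else b i

theorem evalB_override (b : Fin n → Bool) {t : List (Lit n)} (ht : ¬Contra t) :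
    evalB (override b t) t = true := by
  refine List.all_eq_true.2 fun ⟨i, p⟩ hl => (litValB_eq_true_iff _ _).2 ?_
  by_cases hp : p = b i
  · subst hp
    have hflip : ((i, !b i) : Lit n) ∉ t := fun hflip =>
      ht ⟨i, by cases h : b i <;> simp_all⟩
    simp [override, hflip]
  · obtain rfl := Bool.eq_not.2 hp
    simp [override, hl]

theorem mem_of_litValB_override {b : Fin n → Bool} {t : List (Lit n)} {l : Lit n}
    (hb : litValB b l = false) (hl : litValB (override b t) l = true) : l ∈ t := by
  rcases l with ⟨i, p⟩
  rw [← Bool.not_eq_true, litValB_eq_true_iff] at hb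
  rw [litValB_eq_true_iff] at hl
  dsimp only at hb hl
  obtain rfl := Bool.eq_not.2 (Ne.symm hb)
  by_contra hmem
  simp [override, hmem] at hl

end Term

theorem exists_impPart_evalM_le {A B : List (List (Lit n))} (hAt : ∀ t ∈ A, t ≠ [])
    (hBt : ∀ s ∈ B, s ≠ []) (hAB : ∀ b, DNF.evalB b A = DNF.evalB b B)
    {v : Fin n → ℤ} (hv : ∀ i, v i ≠ 0) (hA : DNF.evalB (signValuation v) A = false)
    {t : List (Lit n)} (ht : t ∈ impPart A) :
    ∃ s ∈ impPart B, Term.evalM v t ≤ Term.evalM v s := by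
  obtain ⟨htA, htc⟩ := mem_impPart.1 ht
  have htv : ¬0 < Term.evalM v t := by
    intro hpos
    rw [DNF.evalB, List.any_eq_false] at hA
    exact hA t htA ((Term.evalB_signValuation hv (hAt t htA)).trans (decide_eq_true hpos))
  have hB : DNF.evalB (Term.override (signValuation v) t) (impPart B) = true := by
    rw [DNF.evalB_impPart, ← hAB]
    exact List.any_eq_true.2 ⟨t, htA, Term.evalB_override _ htc⟩
  obtain ⟨s, hs, hsb⟩ := List.any_eq_true.1 hB
  refine ⟨s, hs, (Term.le_evalM_iff v (hBt s (mem_impPart.1 hs).1)).2 fun l hl => ?_⟩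
  cases hlb : litValB (signValuation v) l
  · have hlt := Term.mem_of_litValB_override hlb (List.all_eq_true.1 hsb l hl)
    exact (Term.le_evalM_iff v (hAt t htA)).1 le_rfl l hlt
  · rw [litValB_signValuation hv, decide_eq_true_iff] at hlb
    omega

theorem impPart_eq_of_neg_general {n : ℕ} (φ ψ : PropForm n)
    (Dφ Dψ : List (List (Lit n)))
    (hDφt : ∀ t ∈ Dφ, t ≠ [])
    (hDψt : ∀ t ∈ Dψ, t ≠ [])
    (hbin : ∀ b : Fin n → Bool, PropForm.evalB b φ = PropForm.evalB b ψ)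
    (hDφ : ∀ v : Fin n → ℤ, (∀ i, v i ≠ 0) → DNF.evalM v Dφ = PropForm.evalM v φ)
    (hDψ : ∀ v : Fin n → ℤ, (∀ i, v i ≠ 0) → DNF.evalM v Dψ = PropForm.evalM v ψ) :
    ∀ v : Fin n → ℤ, (∀ i, v i ≠ 0) → PropForm.evalM v φ < 0 →
      DNF.evalM v (impPart Dφ) = DNF.evalM v (impPart Dψ) := by
  intro v hv hneg
  have hDbin : ∀ b, DNF.evalB b Dφ = DNF.evalB b Dψ := fun b => by
    rw [DNF.evalB_eq_of_evalM_eq hDφt hDφ, DNF.evalB_eq_of_evalM_eq hDψt hDψ, hbin]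
  have hφ : DNF.evalB (signValuation v) Dφ = false := by
    rw [DNF.evalB_eq_of_evalM_eq hDφt hDφ, PropForm.evalB_signValuation hv, decide_eq_false_iff_not]
    omega
  have hψ : DNF.evalB (signValuation v) Dψ = false := hDbin _ ▸ hφ
  exact DNF.evalM_eq_of_forall_exists_le v
    (fun t ht => exists_impPart_evalM_le hDφt hDψt hDbin hv hφ ht)
    (fun s hs => exists_impPart_evalM_le hDψt hDφt (fun b => (hDbin b).symm) hv hψ hs)

/-- for binary-equivalent satisfiable formulas `φ` and `ψ` with
`M`-equivalent DNFs `Dφ` and `Dψ`, the non-contradictory parts of `Dφ` and `Dψ`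
evaluate equally under every `M`-valuation making `φ` negative. -/
theorem impPart_eq_of_neg {n : ℕ} (φ ψ : PropForm n)
    (Dφ Dψ : List (List (Lit n)))
    (hDφne : Dφ ≠ []) (hDφt : ∀ t ∈ Dφ, t ≠ [])
    (hDψne : Dψ ≠ []) (hDψt : ∀ t ∈ Dψ, t ≠ [])
    (hbin : ∀ b : Fin n → Bool, PropForm.evalB b φ = PropForm.evalB b ψ)
    (hsat : ∃ b : Fin n → Bool, PropForm.evalB b φ = true)
    (hDφ : ∀ v : Fin n → ℤ, (∀ i, v i ≠ 0) → DNF.evalM v Dφ = PropForm.evalM v φ)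
    (hDψ : ∀ v : Fin n → ℤ, (∀ i, v i ≠ 0) → DNF.evalM v Dψ = PropForm.evalM v ψ) :
    ∀ v : Fin n → ℤ, (∀ i, v i ≠ 0) → PropForm.evalM v φ < 0 →
      DNF.evalM v (impPart Dφ) = DNF.evalM v (impPart Dψ) :=
  impPart_eq_of_neg_general φ ψ Dφ Dψ hDφt hDψt hbin hDφ hDψ
end
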